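/- Let X ~ Binomial(n, p₀) and define H(p,x) = Pr(X > x) = Σ_{x < k ≤ n} C(n,k) p^k (1-p)^{n-k}. Then for all t ∈ (0,1), Pr(H(p₀, X) ≤ t) ≥ t; that is, H(p,x) is an upper confidence distribution for p₀. -/

import Mathlib

open MeasureTheory Set

/-- The upper tail of a Binomial(n,p) distribution beyond x:
H(p,x) = Pr(X > x) = Σ_{x < k ≤ n} C(n,k) p^k (1-p)^{n-k}. -/
noncomputable def binomUpper (n : ℕ) (p : ℝ) (x : ℕ) : ℝ :=
  ∑ k ∈ Finset.Ioc x n, (n.choose k : ℝ) * p ^ k * (1 - p) ^ (n - k)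

/-!
Let `m` be the least `x` with `H(p₀, x) ≤ t` (it exists since `H(p₀, n) = 0`). As `H(p₀, ·)` is
antitone, `H(p₀, X) > t` forces `X < m`, and if `m > 0` then
`P(X ≤ m - 1) ≤ 1 - H(p₀, m - 1) < 1 - t` by minimality of `m`. Only subadditivity of `μ` enters,
so no measurability of `X` is needed.
-/

lemma binom_term_nonneg {p : ℝ} (hp : p ∈ Icc 0 1) (n k : ℕ) :
    0 ≤ (n.choose k : ℝ) * p ^ k * (1 - p) ^ (n - k) := by
  have : 0 ≤ 1 - p := sub_nonneg.2 hp.2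
  have := hp.1
  positivity

@[simp]
lemma binomUpper_self (n : ℕ) (p : ℝ) : binomUpper n p n = 0 := by
  simp [binomUpper]

lemma binomUpper_antitone {p : ℝ} (hp : p ∈ Icc 0 1) (n : ℕ) : Antitone (binomUpper n p) :=
  fun _ _ hxy => Finset.sum_le_sum_of_subset_of_nonneg (Finset.Ioc_subset_Ioc_left hxy)
    fun k _ _ => binom_term_nonneg hp n k

lemma sum_Iic_add_binomUpper (n : ℕ) (p : ℝ) {x : ℕ} (hx : x ≤ n) :
    ∑ k ∈ Finset.Iic x, (n.choose k : ℝ) * p ^ k * (1 - p) ^ (n - k) + binomUpper n p x = 1 := by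
  rw [binomUpper, ← Finset.sum_union (Finset.Iic_disjoint_Ioc le_rfl),
    Finset.Iic_union_Ioc_eq_Iic hx, ← Nat.range_succ_eq_Iic]
  calc ∑ k ∈ Finset.range (n + 1), (n.choose k : ℝ) * p ^ k * (1 - p) ^ (n - k)
      = (p + (1 - p)) ^ n := by rw [add_pow]; exact Finset.sum_congr rfl fun k _ => by ring
    _ = 1 := by rw [add_sub_cancel, one_pow]

lemma measure_le_le_one_sub_binomUpper {Ω : Type*} [MeasurableSpace Ω] {μ : Measure Ω}
    {n : ℕ} {p : ℝ} (hp : p ∈ Icc 0 1) {X : Ω → ℕ}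
    (hlaw : ∀ k, k ≤ n →
      μ {ω | X ω = k} = ENNReal.ofReal ((n.choose k : ℝ) * p ^ k * (1 - p) ^ (n - k)))
    {x : ℕ} (hx : x ≤ n) :
    μ {ω | X ω ≤ x} ≤ ENNReal.ofReal (1 - binomUpper n p x) :=
  calc μ {ω | X ω ≤ x} = μ (⋃ k ∈ Finset.Iic x, {ω | X ω = k}) := by congr 1; ext; simp
    _ ≤ ∑ k ∈ Finset.Iic x, μ {ω | X ω = k} := measure_biUnion_finset_le _ _
    _ = ∑ k ∈ Finset.Iic x, ENNReal.ofReal ((n.choose k : ℝ) * p ^ k * (1 - p) ^ (n - k)) :=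
      Finset.sum_congr rfl fun k hk => hlaw k ((Finset.mem_Iic.1 hk).trans hx)
    _ = ENNReal.ofReal (∑ k ∈ Finset.Iic x, (n.choose k : ℝ) * p ^ k * (1 - p) ^ (n - k)) :=
      (ENNReal.ofReal_sum_of_nonneg fun k _ => binom_term_nonneg hp n k).symm
    _ = ENNReal.ofReal (1 - binomUpper n p x) :=
      congrArg ENNReal.ofReal (eq_sub_of_add_eq (sum_Iic_add_binomUpper n p hx))

lemma ofReal_le_measure_of_measure_compl_le {Ω : Type*} [MeasurableSpace Ω] {μ : Measure Ω}
    [IsProbabilityMeasure μ] {s : Set Ω} {t : ℝ} (ht : t ≤ 1)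
    (h : μ sᶜ ≤ ENNReal.ofReal (1 - t)) : ENNReal.ofReal t ≤ μ s := by
  have h1 : 1 ≤ μ s + ENNReal.ofReal (1 - t) :=
    (measure_univ (μ := μ) ▸ measure_univ_le_add_compl s).trans (add_le_add le_rfl h)
  calc ENNReal.ofReal t = 1 - ENNReal.ofReal (1 - t) := by
        rw [← ENNReal.ofReal_one, ← ENNReal.ofReal_sub _ (sub_nonneg.2 ht), sub_sub_cancel]
    _ ≤ μ s := tsub_le_iff_right.2 h1

theorem stmt6_general {Ω : Type*} [MeasurableSpace Ω] (μ : Measure Ω) [IsProbabilityMeasure μ]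
    (n : ℕ) (p₀ : ℝ) (hp : p₀ ∈ Set.Ioo (0:ℝ) 1) (X : Ω → ℕ)
    (hlaw : ∀ k, k ≤ n →
      μ {ω | X ω = k} = ENNReal.ofReal ((n.choose k : ℝ) * p₀ ^ k * (1 - p₀) ^ (n - k)))
    (t : ℝ) (ht : t ∈ Set.Ioo (0:ℝ) 1) :
    ENNReal.ofReal t ≤ μ {ω | binomUpper n p₀ (X ω) ≤ t} := by
  have hp' : p₀ ∈ Icc 0 1 := Ioo_subset_Icc_self hp
  have hex : ∃ x, binomUpper n p₀ x ≤ t := ⟨n, by simpa using ht.1.le⟩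
  have hcompl : {ω | binomUpper n p₀ (X ω) ≤ t}ᶜ ⊆ {ω | X ω < Nat.find hex} := fun ω hω =>
    not_le.1 fun hle => hω ((binomUpper_antitone hp' n hle).trans (Nat.find_spec hex))
  refine ofReal_le_measure_of_measure_compl_le ht.2.le ?_
  rcases hfind : Nat.find hex with _ | m
  · rw [hfind] at hcompl
    have hall : {ω | binomUpper n p₀ (X ω) ≤ t} = univ := by simpa using hcompl
    simp [hall]
  · rw [hfind] at hcompl
    have hm : t < binomUpper n p₀ m := not_le.1 (Nat.find_min hex (hfind ▸ m.lt_succ_self))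
    have hmn : m + 1 ≤ n := hfind ▸ Nat.find_min' hex (by simpa using ht.1.le)
    calc μ {ω | binomUpper n p₀ (X ω) ≤ t}ᶜ ≤ μ {ω | X ω ≤ m} :=
          measure_mono fun ω hω => Nat.lt_succ_iff.1 (hcompl hω)
      _ ≤ ENNReal.ofReal (1 - binomUpper n p₀ m) :=
          measure_le_le_one_sub_binomUpper hp' hlaw (by omega)
      _ ≤ ENNReal.ofReal (1 - t) := ENNReal.ofReal_le_ofReal (by linarith)

/-- For X ~ Binomial(n,p₀), H(p₀,X) is stochastically dominated by
Uniform(0,1): Pr(H(p₀,X) ≤ t) ≥ t for all t ∈ (0,1), i.e. H is an upper CD. -/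
theorem stmt6 {Ω : Type*} [MeasurableSpace Ω] (μ : Measure Ω) [IsProbabilityMeasure μ]
    (n : ℕ) (p₀ : ℝ) (hp : p₀ ∈ Set.Ioo (0:ℝ) 1) (X : Ω → ℕ)
    (hrange : ∀ ω, X ω ≤ n)
    (hlaw : ∀ k, k ≤ n →
      μ {ω | X ω = k} = ENNReal.ofReal ((n.choose k : ℝ) * p₀ ^ k * (1 - p₀) ^ (n - k)))
    (t : ℝ) (ht : t ∈ Set.Ioo (0:ℝ) 1) :
    ENNReal.ofReal t ≤ μ {ω | binomUpper n p₀ (X ω) ≤ t} :=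
  stmt6_general μ n p₀ hp X hlaw t ht
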